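/- arXiv:2502.18038 — 2 statements merged into one kernel-verified Lean document; each statement's English description precedes it below -/
import Mathlib

section
/- Suppose Assumption K holds. Then for each ℓ ∈ {0, 1, 2, 3} there exists a constant C such that for all n ∈ ℕ and all h ∈ (0, 1] with nh ≥ 1, sup_{t ≥ h} |S_ℓ(t) − κ_ℓ| ≤ C/(nh). -/
open MeasureTheory Filter Real Set
open scoped ENNReal NNReal Topology

noncomputable section

/-- The Generalized Extreme Value (GEV) cumulative distribution function. -/
def gevCDF (γ μ σ : ℝ) (x : ℝ) : ℝ :=
  if γ = 0 then Real.exp (-Real.exp (-(x - μ) / σ))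
  else if 0 < 1 + γ * (x - μ) / σ then Real.exp (-(1 + γ * (x - μ) / σ) ^ (-(1 / γ)))
  else if 0 < γ then 0 else 1

/-- The `p`-quantile of the GEV distribution with parameters `(γ, μ, σ)`. -/
def gevQuantile (γ μ σ p : ℝ) : ℝ :=
  if γ = 0 then μ - σ * Real.log (-Real.log p)
  else μ + σ * ((-Real.log p) ^ (-γ) - 1) / γ

/-- σ-field of the past, F_{-∞}^k = σ(ε_i : i ≤ k). -/
def sigmaPast {Ω : Type*} (ε : ℤ → Ω → ℝ) (k : ℤ) : MeasurableSpace Ω :=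
  ⨆ i : {i : ℤ // i ≤ k}, MeasurableSpace.comap (ε i) inferInstance

/-- σ-field of the future, F_j^∞ = σ(ε_i : i ≥ j). -/
def sigmaFuture {Ω : Type*} (ε : ℤ → Ω → ℝ) (j : ℤ) : MeasurableSpace Ω :=
  ⨆ i : {i : ℤ // j ≤ i}, MeasurableSpace.comap (ε i) inferInstance

/-- Strong (α-) mixing coefficients. -/
def alphaMix {Ω : Type*} [MeasurableSpace Ω] (P : Measure Ω) (ε : ℤ → Ω → ℝ) (m : ℕ) : ℝ :=
  sSup {x : ℝ | ∃ (k j : ℤ) (A B : Set Ω),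
    k < j - (m : ℤ) ∧ MeasurableSet[sigmaPast ε k] A ∧ MeasurableSet[sigmaFuture ε j] B ∧
    x = |(P (A ∩ B)).toReal - (P A).toReal * (P B).toReal|}

/-- The process is strongly mixing if α(m) → 0. -/
def StronglyMixing {Ω : Type*} [MeasurableSpace Ω] (P : Measure Ω) (ε : ℤ → Ω → ℝ) : Prop :=
  Tendsto (fun m => alphaMix P ε m) atTop (𝓝 0)

/-- Strict stationarity of the process. -/
def StrictlyStationary {Ω : Type*} [MeasurableSpace Ω] (P : Measure Ω) (ε : ℤ → Ω → ℝ) : Prop :=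
  ∀ (k : ℤ) (m : ℕ) (idx : Fin m → ℤ) (s : Set (Fin m → ℝ)), MeasurableSet s →
    P {ω | (fun j => ε (idx j + k) ω) ∈ s} = P {ω | (fun j => ε (idx j) ω) ∈ s}

/-- Assumption K on the kernel. -/
def AssumpK (K : ℝ → ℝ) : Prop :=
  (∀ x, 0 ≤ K x) ∧ (∀ x, x ∉ Set.Icc (-1 : ℝ) 0 → K x = 0) ∧
  (∫ x in (-1 : ℝ)..0, K x) = 1 ∧
  ∃ C : ℝ≥0, LipschitzOnWith C K (Set.Ioo (-1 : ℝ) 0)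

/-- Kernel moments κ_ℓ. -/
def kappa (K : ℝ → ℝ) (l : ℕ) : ℝ := ∫ x in (-1 : ℝ)..0, x ^ l * K x

/-- S_ℓ(t). -/
def Sl (K : ℝ → ℝ) (n : ℕ) (h : ℝ) (l : ℕ) (t : ℝ) : ℝ :=
  (1 / (n * h)) * ∑' i : ℕ, (((i : ℝ) - n * t) / (n * h)) ^ l * K (((i : ℝ) - n * t) / (n * h))

/-- R_ℓ(t). -/
def Rl (K : ℝ → ℝ) (X : ℕ → ℝ) (n : ℕ) (h : ℝ) (l : ℕ) (t : ℝ) : ℝ :=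
  (1 / (n * h)) * ∑' i : ℕ,
    X i * (((i : ℝ) - n * t) / (n * h)) ^ l * K (((i : ℝ) - n * t) / (n * h))

/-- One-sided local linear estimator with bandwidth h. -/
def muHat (K : ℝ → ℝ) (X : ℕ → ℝ) (n : ℕ) (h : ℝ) (t : ℝ) : ℝ :=
  (Sl K n h 2 t * Rl K X n h 0 t - Sl K n h 1 t * Rl K X n h 1 t) /
    (Sl K n h 0 t * Sl K n h 2 t - Sl K n h 1 t ^ 2)

/-- The Jackknife bias-reduced estimator. -/
def muTilde (K : ℝ → ℝ) (X : ℕ → ℝ) (n : ℕ) (hn : ℝ) (t : ℝ) : ℝ :=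
  2 * muHat K X n (hn / Real.sqrt 2) t - muHat K X n hn t

/-- Equivalent local linear kernel b̄K. -/
def barK (K : ℝ → ℝ) (x : ℝ) : ℝ :=
  (kappa K 2 - kappa K 1 * x) / (kappa K 0 * kappa K 2 - kappa K 1 ^ 2) * K x

/-- The Jackknife kernel K*. -/
def Kstar (K : ℝ → ℝ) (x : ℝ) : ℝ :=
  2 * Real.sqrt 2 * barK K (Real.sqrt 2 * x) - barK K x

/-- Assumption M: μ twice differentiable with Lipschitz second derivative. -/
def AssumpM (μ : ℝ → ℝ) : Prop :=
  (∀ x, DifferentiableAt ℝ μ x) ∧ (∀ x, DifferentiableAt ℝ (deriv μ) x) ∧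
  ∃ C : ℝ≥0, LipschitzWith C (deriv (deriv μ))

/-- Assumption E on the error process (with scaling sequences a, b, limit GEV cdf G
and scaling exponent γ). -/
def AssumpE {Ω : Type*} [MeasurableSpace Ω] (P : Measure Ω) (ε : ℤ → Ω → ℝ)
    (a b : ℕ → ℝ) (G : ℝ → ℝ) (γ : ℝ) : Prop :=
  (∀ i, Measurable (ε i)) ∧
  StrictlyStationary P ε ∧
  (∀ i, ∫ ω, ε i ω ∂P = 0) ∧
  StronglyMixing P ε ∧
  (∃ δ > (0 : ℝ), ∃ C : ℝ, (∀ i : ℤ, ∫ ω, |ε i ω| ^ (4 + δ) ∂P ≤ C) ∧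
    Summable (fun i : ℕ => alphaMix P ε (i + 1) ^ (1 / 6 - 1 / δ))) ∧
  (∀ n, 0 < a n) ∧
  (∃ γ₀ μ₀ σ₀ : ℝ, 0 < σ₀ ∧ G = gevCDF γ₀ μ₀ σ₀) ∧
  (∃ (Ω' : Type) (_ : MeasurableSpace Ω') (Q : Measure Ω') (_ : IsProbabilityMeasure Q)
      (εt : ℕ → Ω' → ℝ),
    (∀ i, Measurable (εt i)) ∧
    ProbabilityTheory.iIndepFun εt Q ∧
    (∀ i, Measure.map (εt i) Q = Measure.map (ε 1) P) ∧
    (∀ x : ℝ, Tendsto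
      (fun n => (Q {ω | ∀ i ∈ Finset.Icc 1 n, |εt i ω| ≤ a n * x + b n}).toReal)
      atTop (𝓝 (G x)))) ∧
  (∃ x L : ℝ, Tendsto
      (fun n : ℕ => (P {ω | ∀ i ∈ Finset.Icc (1 : ℤ) (n : ℤ), |ε i ω| ≤ a n * x + b n}).toReal)
      atTop (𝓝 L)) ∧
  (∀ r : ℕ → ℕ, (∀ n, 1 ≤ r n) → Tendsto (fun n => (r n : ℝ) / n) atTop (𝓝 0) →
    ∀ᶠ n in atTop,
      a n / a (r n) = ((n : ℝ) / r n) ^ γ ∧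
      b n = b (r n) + a (r n) * (((n : ℝ) / r n) ^ γ - 1) / γ)


/-- The bandwidth rate condition \eqref{eq:conv_rate}. -/
def BandwidthRate (h a : ℕ → ℝ) : Prop :=
  (∀ n, h n ∈ Set.Ioo (0 : ℝ) 1) ∧ Tendsto h atTop (𝓝 0) ∧
  Tendsto (fun n : ℕ => (1 / a n) * (h n ^ 3 +
    Real.sqrt (|Real.log (h n)| / (n * h n)) + 1 / (n * h n ^ ((5 : ℝ) / 4))))
    atTop (𝓝 0)

/-- Assumption T: the extremal index ρ, the GEV parameters θ_ρ = (γρ, μρ, σρ) of 𝒢^ρ and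
estimators (γ̂ₙ, μ̂ₙ, σ̂ₙ) of θₙ = (γρ, aₙ μρ + bₙ, aₙ σρ) satisfying the stated
consistency rates. -/
def AssumpT {Ω : Type*} [MeasurableSpace Ω] (P : Measure Ω) (ε : ℤ → Ω → ℝ)
    (a b : ℕ → ℝ) (G : ℝ → ℝ) (ρ γρ μρ σρ : ℝ) (γhat μhat σhat : ℕ → Ω → ℝ) : Prop :=
  ρ ∈ Set.Ioc (0 : ℝ) 1 ∧
  (∀ x : ℝ, Tendsto (fun n : ℕ =>
      (P {ω | ∀ i ∈ Finset.Icc (1 : ℤ) (n : ℤ), |ε i ω| ≤ a n * x + b n}).toReal)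
    atTop (𝓝 (G x ^ ρ))) ∧
  0 < σρ ∧ (∀ x, G x ^ ρ = gevCDF γρ μρ σρ x) ∧
  (∀ n, Measurable (γhat n)) ∧ (∀ n, Measurable (μhat n)) ∧ (∀ n, Measurable (σhat n)) ∧
  (∀ η > (0 : ℝ),
    Tendsto (fun n => (P {ω | η < |γhat n ω - γρ|}).toReal) atTop (𝓝 0)) ∧
  (∀ η > (0 : ℝ),
    Tendsto (fun n => (P {ω | η < |(μhat n ω - (a n * μρ + b n)) / a n|}).toReal)
      atTop (𝓝 0)) ∧
  (∀ η > (0 : ℝ),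
    Tendsto (fun n => (P {ω | η < |(σhat n ω - a n * σρ) / a n|}).toReal) atTop (𝓝 0))

/-- The weight-approximation error Δₙ(i, t). -/
def DeltaK (K : ℝ → ℝ) (n : ℕ) (h : ℝ) (i : ℕ) (t : ℝ) : ℝ :=
  (Sl K n h 2 t - Sl K n h 1 t * (((i : ℝ) - n * t) / (n * h))) /
      (Sl K n h 0 t * Sl K n h 2 t - Sl K n h 1 t ^ 2) *
      K (((i : ℝ) - n * t) / (n * h)) -
    barK K (((i : ℝ) - n * t) / (n * h))

/-- L²-norm of a real function. -/
def l2norm (f : ℝ → ℝ) : ℝ := Real.sqrt (∫ x, f x ^ 2)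

/-! `S_ℓ(t)` is a right-endpoint Riemann sum, with mesh `δ = 1/(nh)`, of
`f(x) = x^ℓ K(x)` over a grid whose first point lies left of `-1` as soon as `t ≥ h`; so `κ_ℓ`
splits into the integrals of `f` over the grid cells. On a cell inside `(-1, 0)` the Lipschitz
bound makes the error `O(δ²)`, and these cells have total length at most `1`. Only the two
cells containing `-1` or `0` see the jumps of `f`, and they cost `O(δ)` each. -/

theorem LipschitzOnWith.isBounded_image {α β : Type*} [PseudoMetricSpace α]
    [PseudoMetricSpace β] {f : α → β} {K : ℝ≥0} {s : Set α} (hf : LipschitzOnWith K f s)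
    (hs : Bornology.IsBounded s) : Bornology.IsBounded (f '' s) := by
  obtain ⟨C, hC⟩ := Metric.isBounded_iff.1 hs
  exact Metric.isBounded_image_iff.2 ⟨K * C, fun x hx y hy =>
    (hf.dist_le_mul x hx y hy).trans (by gcongr; exact hC hx hy)⟩

theorem LipschitzOnWith.mul_of_norm_le {α R : Type*} [PseudoMetricSpace α] [SeminormedRing R]
    {f g : α → R} {s : Set α} {Kf Kg Mf Mg : ℝ≥0}
    (hf : LipschitzOnWith Kf f s) (hg : LipschitzOnWith Kg g s)
    (hMf : ∀ x ∈ s, ‖f x‖ ≤ Mf) (hMg : ∀ x ∈ s, ‖g x‖ ≤ Mg) :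
    LipschitzOnWith (Mf * Kg + Mg * Kf) (fun x => f x * g x) s := by
  refine LipschitzOnWith.of_dist_le_mul fun x hx y hy => ?_
  have hfd := hf.dist_le_mul x hx y hy
  have hgd := hg.dist_le_mul x hx y hy
  rw [dist_eq_norm] at hfd hgd ⊢
  calc ‖f x * g x - f y * g y‖ = ‖f x * (g x - g y) + (f x - f y) * g y‖ := by
        congr 1; noncomm_ring
    _ ≤ ‖f x‖ * ‖g x - g y‖ + ‖f x - f y‖ * ‖g y‖ :=
        (norm_add_le _ _).trans (add_le_add (norm_mul_le _ _) (norm_mul_le _ _))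
    _ ≤ Mf * (Kg * dist x y) + Kf * dist x y * Mg := by
        gcongr
        · exact hMf x hx
        · exact hMg y hy
    _ = ↑(Mf * Kg + Mg * Kf) * dist x y := by push_cast; ring

theorem lipschitzOnWith_pow_Icc (n : ℕ) :
    LipschitzOnWith n (fun x : ℝ => x ^ n) (Icc (-1) 1) := by
  refine LipschitzOnWith.of_dist_le_mul fun x hx y hy => ?_
  have hx1 : |x| ≤ 1 := abs_le.2 hx
  have hy1 : |y| ≤ 1 := abs_le.2 hy
  rw [Real.dist_eq, Real.dist_eq]
  calc |x ^ n - y ^ n| ≤ |x - y| * n * max |x| |y| ^ (n - 1) := abs_pow_sub_pow_le _ _ _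
    _ ≤ |x - y| * n * 1 := by gcongr; exact pow_le_one₀ (by positivity) (max_le hx1 hy1)
    _ = _ := by push_cast; ring

theorem intervalIntegral_eq_integral_of_forall_notMem_Icc {f : ℝ → ℝ} {a b : ℝ} (hab : a ≤ b)
    (hf : ∀ x ∉ Icc a b, f x = 0) : ∫ x in a..b, f x = ∫ x, f x := by
  rw [intervalIntegral.integral_of_le hab, ← integral_Icc_eq_integral_Ioc,
    setIntegral_eq_integral_of_forall_compl_eq_zero hf]

theorem intervalIntegral_indicator_one_Icc {a b c d : ℝ} (hab : a ≤ b) (hc : c ≤ a)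
    (hd : b ≤ d) : ∫ u in a..b, (Icc c d).indicator (1 : ℝ → ℝ) u = b - a := by
  rw [intervalIntegral.integral_congr (g := fun _ => (1 : ℝ)), intervalIntegral.integral_const,
    smul_eq_mul, mul_one]
  intro u hu
  rw [uIcc_of_le hab] at hu
  exact indicator_of_mem (show u ∈ Icc c d from ⟨hc.trans hu.1, hu.2.trans hd⟩) _

theorem abs_mul_sub_intervalIntegral_le {f : ℝ → ℝ} {a b ε : ℝ} (hab : a ≤ b)
    (hf : IntervalIntegrable f volume a b) (hε : ∀ u ∈ Ioc a b, |f b - f u| ≤ ε) :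
    |(b - a) * f b - ∫ u in a..b, f u| ≤ (b - a) * ε := by
  have hconst : (b - a) * f b = ∫ _ in a..b, f b := by simp
  rw [hconst, ← intervalIntegral.integral_sub intervalIntegrable_const hf]
  have := intervalIntegral.norm_integral_le_of_norm_le_const (a := a) (b := b)
    (f := fun u => f b - f u) (C := ε) (fun u hu => by rw [uIoc_of_le hab] at hu; exact hε u hu)
  simpa [abs_of_nonneg (sub_nonneg.2 hab), mul_comm] using this

theorem Monotone.sum_ite_mem_Ioc_succ_le_one {y : ℕ → ℝ} (hy : Monotone y) (s : Finset ℕ)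
    (z : ℝ) : ∑ k ∈ s, (if z ∈ Ioc (y k) (y (k + 1)) then 1 else 0 : ℝ) ≤ 1 := by
  rw [Finset.sum_boole]
  refine Nat.cast_le_one.2 (Finset.card_le_one.2 fun k hk k' hk' => ?_)
  by_contra hne
  exact Set.disjoint_left.1 (hy.pairwise_disjoint_on_Ioc_succ hne) (Finset.mem_filter.1 hk).2
    (Finset.mem_filter.1 hk').2

theorem sum_intervalIntegral_eq_of_forall_notMem_Icc {g : ℝ → ℝ} {c d : ℝ} {y : ℕ → ℝ} {M : ℕ}
    (hg0 : ∀ x ∉ Icc c d, g x = 0) (hg : Integrable g) (hcd : c ≤ d) (h0 : y 0 ≤ c)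
    (hM : d ≤ y M) : ∑ k ∈ Finset.range M, ∫ u in y k..y (k + 1), g u = ∫ u in c..d, g u := by
  rw [intervalIntegral.sum_integral_adjacent_intervals fun k _ => hg.intervalIntegrable,
    intervalIntegral_eq_integral_of_forall_notMem_Icc hcd hg0,
    intervalIntegral_eq_integral_of_forall_notMem_Icc (h0.trans (hcd.trans hM)) fun x hx =>
      hg0 x fun h => hx ⟨h0.trans h.1, h.2.trans hM⟩]

section RiemannSum

variable {f : ℝ → ℝ} {c d B : ℝ} {L : ℝ≥0}

-- Summed over the cells of a grid, the first term adds up to `L (d - c)` and each indicator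
-- to at most `1`.
theorem abs_mul_sub_intervalIntegral_le_of_lipschitzOnWith (hf0 : ∀ x ∉ Icc c d, f x = 0)
    (hB : ∀ x, |f x| ≤ B) (hL : LipschitzOnWith L f (Ioo c d)) (hf : Integrable f)
    {a b : ℝ} (hab : a ≤ b) :
    |(b - a) * f b - ∫ u in a..b, f u| ≤
      (b - a) * (L * (∫ u in a..b, (Icc c d).indicator (1 : ℝ → ℝ) u) +
        2 * B * ((if c ∈ Ioc a b then 1 else 0) + (if d ∈ Ioc a b then 1 else 0))) := by
  have hB0 : 0 ≤ B := (abs_nonneg _).trans (hB 0)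
  have hI : 0 ≤ ∫ u in a..b, (Icc c d).indicator (1 : ℝ → ℝ) u :=
    intervalIntegral.integral_nonneg hab fun u _ => indicator_nonneg (fun _ _ => zero_le_one) u
  have hcell := fun ε => abs_mul_sub_intervalIntegral_le (ε := ε) hab hf.intervalIntegrable
  by_cases hbad : c ∈ Ioc a b ∨ d ∈ Ioc a b
  · refine (hcell (2 * B) fun u _ => ?_).trans ?_
    · linarith [abs_sub (f b) (f u), hB b, hB u]
    · have : 1 ≤ ((if c ∈ Ioc a b then 1 else 0) + (if d ∈ Ioc a b then 1 else 0) : ℝ) := by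
        rcases hbad with h | h <;> simp only [h, if_true] <;> split_ifs <;> norm_num
      refine mul_le_mul_of_nonneg_left ?_ (sub_nonneg.2 hab)
      nlinarith [mul_nonneg L.coe_nonneg hI]
  simp only [not_or] at hbad
  simp only [if_neg hbad.1, if_neg hbad.2, add_zero, mul_zero]
  by_cases hgood : c ≤ a ∧ b < d
  · refine (hcell (L * (b - a)) fun u hu => ?_).trans
      (by rw [intervalIntegral_indicator_one_Icc hab hgood.1 hgood.2.le])
    have hmem : ∀ v ∈ Ioc a b, v ∈ Ioo c d := fun v hv =>
      ⟨hgood.1.trans_lt hv.1, hv.2.trans_lt hgood.2⟩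
    have := hL.dist_le_mul b (hmem b ⟨hu.1.trans_le hu.2, le_rfl⟩) u (hmem u hu)
    rw [Real.dist_eq, Real.dist_eq, abs_of_nonneg (sub_nonneg.2 hu.2)] at this
    exact this.trans (by gcongr; linarith [hu.1])
  · have hzero : ∀ v ∈ Ioc a b, f v = 0 := fun v hv => hf0 v fun hv' => by
      simp only [mem_Ioc, not_and_or, not_lt, not_le] at hbad hgood
      rcases hv with ⟨h1, h2⟩
      rcases hv' with ⟨h3, h4⟩
      rcases hbad with ⟨h5 | h5, h6 | h6⟩ <;> rcases hgood with h7 | h7 <;> linarith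
    refine (hcell 0 fun u hu => ?_).trans ?_
    · rw [hzero u hu, hzero b ⟨hu.1.trans_le hu.2, le_rfl⟩, sub_zero, abs_zero]
    · rw [mul_zero]
      exact mul_nonneg (sub_nonneg.2 hab) (mul_nonneg L.coe_nonneg hI)

theorem abs_mul_tsum_sub_intervalIntegral_le (hf0 : ∀ x ∉ Icc c d, f x = 0)
    (hB : ∀ x, |f x| ≤ B) (hL : LipschitzOnWith L f (Ioo c d)) (hf : Integrable f)
    (hcd : c ≤ d) {δ y₀ : ℝ} (hδ : 0 < δ) (hy₀ : y₀ ≤ c) :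
    |δ * ∑' k : ℕ, f (y₀ + (k + 1) * δ) - ∫ u in c..d, f u| ≤ δ * (L * (d - c) + 4 * B) := by
  set y : ℕ → ℝ := fun k => y₀ + k * δ with hy
  have hy_mono : Monotone y := fun i j hij => by
    have : (i : ℝ) ≤ j := by exact_mod_cast hij
    simp only [hy]; gcongr
  have hy_succ : ∀ k : ℕ, y (k + 1) - y k = δ := fun k => by simp only [hy]; push_cast; ring
  have hy_cast : ∀ k : ℕ, y₀ + (k + 1) * δ = y (k + 1) := fun k => by simp only [hy]; push_cast; rfl
  obtain ⟨M, hM⟩ : ∃ M : ℕ, d ≤ y M := by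
    obtain ⟨M, hM⟩ := exists_nat_ge ((d - y₀) / δ)
    exact ⟨M, by have := (div_le_iff₀ hδ).1 hM; simp only [hy]; linarith⟩
  have hy0 : y 0 ≤ c := by simpa [hy] using hy₀
  have hsum : ∑' k : ℕ, f (y₀ + (k + 1) * δ) = ∑ k ∈ Finset.range M, f (y (k + 1)) := by
    simp only [hy_cast]
    refine tsum_eq_sum fun k hk => hf0 _ fun hmem => ?_
    have : y M < y (k + 1) := by
      have : (M : ℝ) < k + 1 := by exact_mod_cast Nat.lt_succ_of_le (by simpa using hk)
      simp only [hy]; push_cast; gcongr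
    linarith [hmem.2]
  have hind_int : Integrable ((Icc c d).indicator (1 : ℝ → ℝ)) :=
    (integrable_indicator_iff measurableSet_Icc).2 (integrableOn_const (by simp))
  calc |δ * ∑' k : ℕ, f (y₀ + (k + 1) * δ) - ∫ u in c..d, f u|
      = |∑ k ∈ Finset.range M,
          ((y (k + 1) - y k) * f (y (k + 1)) - ∫ u in y k..y (k + 1), f u)| := by
        rw [hsum, ← sum_intervalIntegral_eq_of_forall_notMem_Icc hf0 hf hcd hy0 hM,
          Finset.sum_sub_distrib, Finset.mul_sum]
        simp only [hy_succ]
    _ ≤ ∑ k ∈ Finset.range M, (y (k + 1) - y k) *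
          (L * (∫ u in y k..y (k + 1), (Icc c d).indicator (1 : ℝ → ℝ) u) +
            2 * B * ((if c ∈ Ioc (y k) (y (k + 1)) then 1 else 0) +
              (if d ∈ Ioc (y k) (y (k + 1)) then 1 else 0))) :=
        (Finset.abs_sum_le_sum_abs _ _).trans <| Finset.sum_le_sum fun k _ =>
          abs_mul_sub_intervalIntegral_le_of_lipschitzOnWith hf0 hB hL hf (hy_mono k.le_succ)
    _ = δ * (L * (∑ k ∈ Finset.range M,
            ∫ u in y k..y (k + 1), (Icc c d).indicator (1 : ℝ → ℝ) u) +
          2 * B * (∑ k ∈ Finset.range M, (if c ∈ Ioc (y k) (y (k + 1)) then 1 else 0 : ℝ) +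
            ∑ k ∈ Finset.range M, (if d ∈ Ioc (y k) (y (k + 1)) then 1 else 0 : ℝ))) := by
        simp only [hy_succ, Finset.mul_sum, Finset.sum_add_distrib, mul_add]
    _ ≤ δ * (L * (d - c) + 2 * B * (1 + 1)) := by
        have hB0 : 0 ≤ B := (abs_nonneg _).trans (hB 0)
        rw [sum_intervalIntegral_eq_of_forall_notMem_Icc (fun x hx => indicator_of_notMem hx _)
          hind_int hcd hy0 hM, intervalIntegral_indicator_one_Icc hcd le_rfl le_rfl]
        gcongr <;> exact hy_mono.sum_ite_mem_Ioc_succ_le_one _ _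
    _ = δ * (L * (d - c) + 4 * B) := by ring

end RiemannSum

theorem AssumpK.exists_abs_le {K : ℝ → ℝ} (hK : AssumpK K) : ∃ B, ∀ x, |K x| ≤ B := by
  obtain ⟨-, hsupp, -, C, hC⟩ := hK
  have hbdd : Bornology.IsBounded (K '' Icc (-1) 0) := by
    rw [← Ico_insert_right (by norm_num), ← Ioo_insert_left (by norm_num), image_insert_eq,
      image_insert_eq]
    exact ((hC.isBounded_image (Metric.isBounded_Ioo _ _)).insert _).insert _
  obtain ⟨B, hB⟩ := isBounded_iff_forall_norm_le.1 hbdd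
  refine ⟨B, fun x => ?_⟩
  by_cases hx : x ∈ Icc (-1) 0
  · exact hB _ (mem_image_of_mem K hx)
  · rw [hsupp x hx, abs_zero]
    exact (norm_nonneg _).trans (hB _ (mem_image_of_mem K (left_mem_Icc.2 (by norm_num))))

theorem AssumpK.abs_pow_mul_le {K : ℝ → ℝ} (hK : AssumpK K) (l : ℕ) (x : ℝ) :
    |x ^ l * K x| ≤ |K x| := by
  by_cases hx : x ∈ Icc (-1) 0
  · rw [abs_mul, abs_pow]
    exact mul_le_of_le_one_left (abs_nonneg _)
      (pow_le_one₀ (abs_nonneg x) (abs_le.2 ⟨hx.1, hx.2.trans zero_le_one⟩))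
  · simp [hK.2.1 x hx]

theorem AssumpK.integrable_pow_mul {K : ℝ → ℝ} (hK : AssumpK K) (l : ℕ) :
    Integrable fun x => x ^ l * K x := by
  have hKi : IntervalIntegrable K volume (-1) 0 :=
    intervalIntegral.intervalIntegrable_of_integral_ne_zero (by rw [hK.2.2.1]; exact one_ne_zero)
  have hfi := hKi.continuousOn_mul (continuous_pow l).continuousOn
  refine ((intervalIntegrable_iff_integrableOn_Icc_of_le (by norm_num)).1 hfi)
    |>.integrable_of_forall_notMem_eq_zero fun x hx => ?_
  simp [hK.2.1 x hx]

theorem AssumpK.exists_lipschitzOnWith_pow_mul {K : ℝ → ℝ} (hK : AssumpK K) (l : ℕ) :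
    ∃ L : ℝ≥0, LipschitzOnWith L (fun x => x ^ l * K x) (Ioo (-1) 0) := by
  obtain ⟨B, hB⟩ := hK.exists_abs_le
  obtain ⟨C, hC⟩ := hK.2.2.2
  have hsub : Ioo (-1 : ℝ) 0 ⊆ Icc (-1) 1 :=
    Ioo_subset_Icc_self.trans (Icc_subset_Icc le_rfl zero_le_one)
  refine ⟨_, ((lipschitzOnWith_pow_Icc l).mono hsub).mul_of_norm_le hC (Mf := 1)
    (Mg := B.toNNReal)
    (fun x hx => by
      rw [norm_pow, NNReal.coe_one]
      exact pow_le_one₀ (norm_nonneg _) (abs_le.2 (hsub hx)))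
    (fun x _ => (hB x).trans (Real.le_coe_toNNReal B))⟩

/-- Uniform Riemann-sum approximation: for each ℓ ∈ {0,1,2,3},
sup_{t ≥ h} |S_ℓ(t) − κ_ℓ| ≤ C/(n h). -/
theorem Sl_uniform_approximation (K : ℝ → ℝ) (hK : AssumpK K) :
    ∀ l : ℕ, l ≤ 3 → ∃ C : ℝ, ∀ (n : ℕ) (h : ℝ), 0 < h → h ≤ 1 → 1 ≤ (n : ℝ) * h →
      ∀ t : ℝ, h ≤ t → |Sl K n h l t - kappa K l| ≤ C / ((n : ℝ) * h) := by
  intro l _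
  obtain ⟨B, hB⟩ := hK.exists_abs_le
  obtain ⟨L, hL⟩ := hK.exists_lipschitzOnWith_pow_mul l
  refine ⟨L + 4 * B, fun n h _ _ hnh t ht => ?_⟩
  have hN : 0 < (n : ℝ) * h := by linarith
  have hy₀ : -((n : ℝ) * t + 1) / (n * h) ≤ -1 := by
    rw [div_le_iff₀ hN]
    nlinarith [mul_le_mul_of_nonneg_left ht n.cast_nonneg]
  have hriemann := abs_mul_tsum_sub_intervalIntegral_le (f := fun x => x ^ l * K x)
    (fun x hx => by simp [hK.2.1 x hx]) (fun x => (hK.abs_pow_mul_le l x).trans (hB x)) hL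
    (hK.integrable_pow_mul l) (by norm_num) (one_div_pos.2 hN) hy₀
  have hgrid : ∀ k : ℕ, -((n : ℝ) * t + 1) / (n * h) + (k + 1) * (1 / (n * h)) =
      (k - n * t) / (n * h) := fun k => by ring
  simp only [hgrid] at hriemann
  rwa [show ((L : ℝ) + 4 * B) / (n * h) = 1 / (n * h) * (L * (0 - -1) + 4 * B) by ring]

end
end

section
/- Suppose Assumption K holds. Then the kernel b̄K satisfies ∫_{−1}^0 b̄K(x) dx = 1 and ∫_{−1}^0 x b̄K(x) dx = 0, and the Jackknife kernel K* satisfies ∫_ℝ K*(x) dx = 1, ∫_ℝ x K*(x) dx = 0, and ∫_ℝ x² K*(x) dx = 0; that is, K* is a kernel of order at least 3, so the Jackknife combination 2 μ̂_{h/√2} − μ̂_h cancels the second-order bias term of the local linear estimator. -/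
open MeasureTheory Filter Real Set
open scoped ENNReal NNReal Topology

noncomputable section

/-! The moments of `b̄K` are `(κ₂ κ_ℓ - κ₁ κ_{ℓ+1}) / (κ₀ κ₂ - κ₁²)`, which is `1` for `ℓ = 0`
and `0` for `ℓ = 1`; the denominator is positive because it equals
`κ₀ ∫ (x - κ₁/κ₀)² K(x) dx` and `K ≥ 0` has positive mass. Substituting `u = √2 x`,
the `ℓ`-th moment of `K*` is `(2 / √2 ^ ℓ - 1)` times that of `b̄K`, which vanishes for `ℓ = 2`. -/

theorem integral_eq_intervalIntegral_of_notMem_eq_zero {f : ℝ → ℝ} {a b : ℝ} (hab : a ≤ b)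
    (hf : ∀ x, x ∉ Icc a b → f x = 0) : ∫ x, f x = ∫ x in a..b, f x := by
  rw [← setIntegral_eq_integral_of_forall_compl_eq_zero hf, integral_Icc_eq_integral_Ioc,
    intervalIntegral.integral_of_le hab]

theorem integrable_of_notMem_eq_zero {f : ℝ → ℝ} {a b : ℝ} (hab : a ≤ b)
    (hf : ∀ x, x ∉ Icc a b → f x = 0) (hfi : IntervalIntegrable f volume a b) :
    Integrable f := by
  rw [← integrableOn_iff_integrable_of_support_subset
    (Function.support_subset_iff'.2 hf), integrableOn_Icc_iff_integrableOn_Ioc]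
  exact (intervalIntegrable_iff_integrableOn_Ioc_of_le hab).1 hfi

theorem integral_pow_mul_comp_mul_left (g : ℝ → ℝ) (l : ℕ) {a : ℝ} (ha : 0 < a) :
    ∫ x, x ^ l * g (a * x) = (a ^ (l + 1))⁻¹ * ∫ x, x ^ l * g x := by
  have hrescale : ∀ x, x ^ l * g (a * x) = (a ^ l)⁻¹ * ((a * x) ^ l * g (a * x)) := fun x => by
    rw [mul_pow, ← mul_assoc, ← mul_assoc, inv_mul_cancel₀ (pow_ne_zero l ha.ne'), one_mul]
  simp only [hrescale]
  rw [integral_const_mul, Measure.integral_comp_mul_left (fun u => u ^ l * g u),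
    abs_of_pos (inv_pos.2 ha), smul_eq_mul, ← mul_assoc, ← mul_inv, ← pow_succ]

section KernelMoments

variable {K : ℝ → ℝ}

theorem kappa_zero (K : ℝ → ℝ) : kappa K 0 = ∫ x in (-1 : ℝ)..0, K x := by
  simp only [kappa, pow_zero, one_mul]

theorem intervalIntegrable_pow_mul (hK : IntervalIntegrable K volume (-1) 0) (l : ℕ) :
    IntervalIntegrable (fun x => x ^ l * K x) volume (-1) 0 :=
  hK.continuousOn_mul (continuous_pow l).continuousOn

theorem integral_sq_sub_mul (hK : IntervalIntegrable K volume (-1) 0) (c : ℝ) :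
    ∫ x in (-1 : ℝ)..0, (x - c) ^ 2 * K x =
      kappa K 2 - 2 * c * kappa K 1 + c ^ 2 * kappa K 0 := by
  have hP := intervalIntegrable_pow_mul hK
  have expand : ∀ x, (x - c) ^ 2 * K x =
      x ^ 2 * K x - 2 * c * (x ^ 1 * K x) + c ^ 2 * (x ^ 0 * K x) := fun x => by ring
  simp only [expand]
  rw [intervalIntegral.integral_add ((hP 2).sub ((hP 1).const_mul _)) ((hP 0).const_mul _),
    intervalIntegral.integral_sub (hP 2) ((hP 1).const_mul _),
    intervalIntegral.integral_const_mul, intervalIntegral.integral_const_mul]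
  rfl

theorem integral_sq_sub_mul_pos (hK_nonneg : ∀ x, 0 ≤ K x)
    (hK_mass : 0 < ∫ x in (-1 : ℝ)..0, K x) (c : ℝ) :
    0 < ∫ x in (-1 : ℝ)..0, (x - c) ^ 2 * K x := by
  have hK := intervalIntegral.intervalIntegrable_of_integral_ne_zero hK_mass.ne'
  rw [intervalIntegral.integral_pos_iff_support_of_nonneg_ae (ae_of_all _ hK_nonneg) hK]
    at hK_mass
  rw [intervalIntegral.integral_pos_iff_support_of_nonneg_ae
    (ae_of_all _ fun x => mul_nonneg (sq_nonneg _) (hK_nonneg x))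
    (hK.continuousOn_mul (by fun_prop))]
  refine ⟨hK_mass.1, hK_mass.2.trans_le ?_⟩
  rw [← measure_sdiff_null (measure_singleton c)]
  refine measure_mono fun x ⟨⟨hKx, hx⟩, hxc⟩ => ⟨?_, hx⟩
  exact mul_ne_zero (pow_ne_zero 2 (sub_ne_zero.2 hxc)) hKx

theorem kappa_zero_mul_kappa_two_sub_sq_pos (hK_nonneg : ∀ x, 0 ≤ K x)
    (hK_mass : 0 < ∫ x in (-1 : ℝ)..0, K x) :
    0 < kappa K 0 * kappa K 2 - kappa K 1 ^ 2 := by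
  have hκ₀ : 0 < kappa K 0 := kappa_zero K ▸ hK_mass
  have hK := intervalIntegral.intervalIntegrable_of_integral_ne_zero hK_mass.ne'
  have hvar := integral_sq_sub_mul_pos hK_nonneg hK_mass (kappa K 1 / kappa K 0)
  rw [integral_sq_sub_mul hK] at hvar
  have hdet : kappa K 0 * kappa K 2 - kappa K 1 ^ 2 = kappa K 0 *
      (kappa K 2 - 2 * (kappa K 1 / kappa K 0) * kappa K 1 +
        (kappa K 1 / kappa K 0) ^ 2 * kappa K 0) := by
    field_simp
    ring
  rw [hdet]
  positivity

theorem integral_pow_mul_barK (hK : IntervalIntegrable K volume (-1) 0) (l : ℕ) :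
    ∫ x in (-1 : ℝ)..0, x ^ l * barK K x =
      (kappa K 2 * kappa K l - kappa K 1 * kappa K (l + 1)) /
        (kappa K 0 * kappa K 2 - kappa K 1 ^ 2) := by
  have hP := intervalIntegrable_pow_mul hK
  have expand : ∀ x, x ^ l * barK K x =
      (kappa K 2 / (kappa K 0 * kappa K 2 - kappa K 1 ^ 2)) * (x ^ l * K x) -
        (kappa K 1 / (kappa K 0 * kappa K 2 - kappa K 1 ^ 2)) * (x ^ (l + 1) * K x) :=
    fun x => by rw [barK]; ring
  simp only [expand]
  rw [intervalIntegral.integral_sub ((hP l).const_mul _) ((hP (l + 1)).const_mul _),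
    intervalIntegral.integral_const_mul, intervalIntegral.integral_const_mul]
  change _ * kappa K l - _ * kappa K (l + 1) = _
  ring

theorem intervalIntegrable_pow_mul_barK (hK : IntervalIntegrable K volume (-1) 0) (l : ℕ) :
    IntervalIntegrable (fun x => x ^ l * barK K x) volume (-1) 0 := by
  have h := hK.continuousOn_mul (g := fun x => x ^ l *
    ((kappa K 2 - kappa K 1 * x) / (kappa K 0 * kappa K 2 - kappa K 1 ^ 2))) (by fun_prop)
  simpa only [barK, mul_assoc] using h

theorem integral_barK (hK : IntervalIntegrable K volume (-1) 0)
    (hdet : kappa K 0 * kappa K 2 - kappa K 1 ^ 2 ≠ 0) :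
    ∫ x in (-1 : ℝ)..0, barK K x = 1 := by
  have h := integral_pow_mul_barK hK 0
  simp only [pow_zero, one_mul, zero_add] at h
  rw [h, ← sq, mul_comm (kappa K 2), div_self hdet]

theorem integral_mul_barK (hK : IntervalIntegrable K volume (-1) 0) :
    ∫ x in (-1 : ℝ)..0, x * barK K x = 0 := by
  have h := integral_pow_mul_barK hK 1
  simp only [pow_one] at h
  rw [h, mul_comm, sub_self, zero_div]

theorem barK_eq_zero_of_notMem (hK_supp : ∀ x, x ∉ Icc (-1 : ℝ) 0 → K x = 0) {x : ℝ}
    (hx : x ∉ Icc (-1 : ℝ) 0) : barK K x = 0 := by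
  rw [barK, hK_supp x hx, mul_zero]

theorem integrable_pow_mul_barK (hK : IntervalIntegrable K volume (-1) 0)
    (hK_supp : ∀ x, x ∉ Icc (-1 : ℝ) 0 → K x = 0) (l : ℕ) :
    Integrable fun x => x ^ l * barK K x :=
  integrable_of_notMem_eq_zero (by norm_num)
    (fun x hx => by rw [barK_eq_zero_of_notMem hK_supp hx, mul_zero])
    (intervalIntegrable_pow_mul_barK hK l)

theorem integral_pow_mul_barK_eq_intervalIntegral (hK_supp : ∀ x, x ∉ Icc (-1 : ℝ) 0 → K x = 0)
    (l : ℕ) : ∫ x, x ^ l * barK K x = ∫ x in (-1 : ℝ)..0, x ^ l * barK K x :=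
  integral_eq_intervalIntegral_of_notMem_eq_zero (by norm_num)
    (fun x hx => by rw [barK_eq_zero_of_notMem hK_supp hx, mul_zero])

end KernelMoments

theorem integral_pow_mul_Kstar {K : ℝ → ℝ} (l : ℕ)
    (hK : Integrable fun x => x ^ l * barK K x) :
    ∫ x, x ^ l * Kstar K x = (2 / √2 ^ l - 1) * ∫ x, x ^ l * barK K x := by
  have hs : (0 : ℝ) < √2 := by positivity
  have expand : ∀ x, x ^ l * Kstar K x =
      2 * √2 * (x ^ l * barK K (√2 * x)) - x ^ l * barK K x := fun x => by rw [Kstar]; ring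
  simp only [expand]
  have hK_comp : Integrable fun x => x ^ l * barK K (√2 * x) := by
    refine ((hK.comp_mul_left' hs.ne').const_mul (√2 ^ l)⁻¹).congr (ae_of_all _ fun x => ?_)
    simp only [mul_pow]
    field_simp
  rw [integral_sub (hK_comp.const_mul _) hK, integral_const_mul,
    integral_pow_mul_comp_mul_left _ l hs]
  field_simp
  ring

/-- Moment identities for the local linear kernel b̄K and the Jackknife kernel K*:
b̄K has mass one and vanishing first moment, and K* has mass one and vanishing first and
second moments (it is a kernel of order at least 3). -/
theorem jackknife_kernel_moments (K : ℝ → ℝ) (hK : AssumpK K) :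
    (∫ x in (-1 : ℝ)..0, barK K x) = 1 ∧
    (∫ x in (-1 : ℝ)..0, x * barK K x) = 0 ∧
    (∫ x : ℝ, Kstar K x) = 1 ∧
    (∫ x : ℝ, x * Kstar K x) = 0 ∧
    (∫ x : ℝ, x ^ 2 * Kstar K x) = 0 := by
  obtain ⟨hK_nonneg, hK_supp, hK_mass, -⟩ := hK
  have hK_pos : 0 < ∫ x in (-1 : ℝ)..0, K x := by rw [hK_mass]; exact one_pos
  have hK_int := intervalIntegral.intervalIntegrable_of_integral_ne_zero hK_pos.ne'
  have hbar_int := integrable_pow_mul_barK hK_int hK_supp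
  have hbar_moment := integral_pow_mul_barK_eq_intervalIntegral hK_supp
  have hmass := integral_barK hK_int (kappa_zero_mul_kappa_two_sub_sq_pos hK_nonneg hK_pos).ne'
  have hmean := integral_mul_barK hK_int
  refine ⟨hmass, hmean, ?_, ?_, ?_⟩
  · have h := integral_pow_mul_Kstar 0 (hbar_int 0)
    rw [hbar_moment 0] at h
    norm_num [hmass] at h
    exact h
  · have h := integral_pow_mul_Kstar 1 (hbar_int 1)
    rw [hbar_moment 1] at h
    simpa [hmean] using h
  · rw [integral_pow_mul_Kstar 2 (hbar_int 2)]
    norm_num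

end
end
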